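/- Let s ∈ (0,1], let K be an m×r real matrix of full column rank (r ≤ m), and let M_1, M_2 be real symmetric positive definite m×m matrices. Then: (i) if M_2 - M_1 is positive semidefinite, then tr((Kᵀ M_1 K)^s) ≤ tr((Kᵀ M_2 K)^s); and (ii) for every α ∈ [0,1], α·tr((Kᵀ M_1 K)^s) + (1-α)·tr((Kᵀ M_2 K)^s) ≤ tr((Kᵀ(α M_1 + (1-α) M_2)K)^s). (The function ψ_{p,K}(M) = tr((Kᵀ M K)^{-p}) with p = -s ∈ [-1,0) is increasing and concave on positive definite matrices.) -/

import Mathlib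

open Matrix

/-! For `f` concave on `[0, ∞)`, `A ⪰ 0` and an orthonormal basis `(wᵢ)`, Jensen's inequality with
the weights `|⟪wᵢ, uⱼ⟫|²`, `(uⱼ)` an eigenbasis of `A`, gives `⟪wᵢ, f(A) wᵢ⟫ ≤ f ⟪wᵢ, A wᵢ⟫`; summing,
`tr f(A) ≤ ∑ᵢ f ⟪wᵢ, A wᵢ⟫`, with equality for an eigenbasis of `A`. Evaluating both sides in an
eigenbasis of `B`, resp. of `a A + b B`, shows that `A ↦ tr f(A)` is monotone when `f` is, and
concave. The theorem is the case `f = x ^ s` composed with `M ↦ Kᵀ M K`, a linear map preserving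
positive semidefiniteness. -/

/-- The real power `S^s` of a symmetric matrix, defined via the spectral
decomposition: if `S = U diag(μ) Uᵀ` then `S^s = U diag(μ^s) Uᵀ`
(junk value `0` if `S` is not symmetric). -/
noncomputable def mpow {k : ℕ} (S : Matrix (Fin k) (Fin k) ℝ) (s : ℝ) :
    Matrix (Fin k) (Fin k) ℝ :=
  if h : S.IsHermitian then h.cfc (fun x => x ^ s) else 0

namespace Matrix

lemma convex_setOf_posSemidef {n : Type*} : Convex ℝ {A : Matrix n n ℝ | A.PosSemidef} :=
  fun _ hA _ hB _ _ ha hb _ => (hA.smul ha).add (hB.smul hb)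

variable {n : Type*} [Fintype n] [DecidableEq n]

lemma conjTranspose_mul_diagonal_mul_apply_self (Q : Matrix n n ℝ) (d : n → ℝ) (i : n) :
    (Qᴴ * diagonal d * Q) i i = ∑ j, d j * Q j i ^ 2 := by
  simp only [mul_apply, diagonal_apply, conjTranspose_apply, star_trivial, mul_ite, mul_zero,
    Finset.sum_ite_eq', Finset.mem_univ, if_true]
  exact Finset.sum_congr rfl fun j _ => by ring

lemma sum_sq_apply_eq_one {Q : Matrix n n ℝ} (hQ : Qᴴ * Q = 1) (i : n) :
    ∑ j, Q j i ^ 2 = 1 := by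
  simpa [mul_apply, sq] using congr_fun (congr_fun hQ i) i

lemma trace_eq_sum_conjTranspose_mul_mul_apply_self (M : Matrix n n ℝ) {W : Matrix n n ℝ}
    (hW : W * Wᴴ = 1) : M.trace = ∑ i, (Wᴴ * M * W) i i := by
  calc M.trace = (Wᴴ * M * W).trace := by rw [trace_mul_cycle, hW, one_mul]
    _ = ∑ i, (Wᴴ * M * W) i i := rfl

namespace IsHermitian

variable {A : Matrix n n ℝ}

lemma cfc_eq_mul_diagonal_mul (hA : A.IsHermitian) (f : ℝ → ℝ) :
    cfc f A = (hA.eigenvectorUnitary : Matrix n n ℝ) * diagonal (f ∘ hA.eigenvalues) *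
      (hA.eigenvectorUnitary : Matrix n n ℝ)ᴴ := by
  rw [hA.cfc_eq, IsHermitian.cfc, Unitary.conjStarAlgAut_apply, RCLike.ofReal_real_eq_id]
  rfl

lemma eq_mul_diagonal_mul (hA : A.IsHermitian) :
    A = (hA.eigenvectorUnitary : Matrix n n ℝ) * diagonal hA.eigenvalues *
      (hA.eigenvectorUnitary : Matrix n n ℝ)ᴴ := by
  have h := hA.cfc_eq_mul_diagonal_mul id
  rwa [cfc_id ℝ A hA.isSelfAdjoint, Function.id_comp] at h

lemma conjTranspose_eigenvectorUnitary_mul_mul_apply_self (hA : A.IsHermitian) (i : n) :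
    ((hA.eigenvectorUnitary : Matrix n n ℝ)ᴴ * A * hA.eigenvectorUnitary) i i =
      hA.eigenvalues i := by
  have h := hA.conjStarAlgAut_star_eigenvectorUnitary
  rw [Unitary.conjStarAlgAut_star_apply, RCLike.ofReal_real_eq_id] at h
  rw [← star_eq_conjTranspose, h]
  simp

lemma trace_cfc (hA : A.IsHermitian) (f : ℝ → ℝ) :
    (cfc f A).trace = ∑ i, f (hA.eigenvalues i) := by
  rw [hA.cfc_eq_mul_diagonal_mul, trace_mul_cycle, ← star_eq_conjTranspose,
    Unitary.coe_star_mul_self, one_mul, trace_diagonal]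
  rfl

lemma exists_trace_cfc_eq_sum (hA : A.IsHermitian) :
    ∃ W : Matrix n n ℝ, Wᴴ * W = 1 ∧ ∀ f : ℝ → ℝ, (cfc f A).trace = ∑ i, f ((Wᴴ * A * W) i i) :=
  ⟨hA.eigenvectorUnitary, by rw [← star_eq_conjTranspose, Unitary.coe_star_mul_self], fun f => by
    simp only [hA.trace_cfc, hA.conjTranspose_eigenvectorUnitary_mul_mul_apply_self]⟩

end IsHermitian

namespace PosSemidef

variable {A B : Matrix n n ℝ} {f : ℝ → ℝ}

lemma conjTranspose_mul_cfc_mul_apply_self_le (hA : A.PosSemidef)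
    (hf : ConcaveOn ℝ (Set.Ici 0) f) {W : Matrix n n ℝ} (hW : Wᴴ * W = 1) (i : n) :
    (Wᴴ * cfc f A * W) i i ≤ f ((Wᴴ * A * W) i i) := by
  let U := (hA.1.eigenvectorUnitary : Matrix n n ℝ)
  let Q := Uᴴ * W
  have hUU : U * Uᴴ = 1 := Unitary.mul_star_self_of_mem (hA.1.eigenvectorUnitary).2
  have hQ : Qᴴ * Q = 1 := by
    simp only [Q, conjTranspose_mul, conjTranspose_conjTranspose, mul_assoc]
    rw [← mul_assoc U, hUU, one_mul, hW]
  have hconj (d : n → ℝ) : Wᴴ * (U * diagonal d * Uᴴ) * W = Qᴴ * diagonal d * Q := by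
    simp only [Q, conjTranspose_mul, conjTranspose_conjTranspose, mul_assoc]
  have hA' : Wᴴ * A * W = Qᴴ * diagonal hA.1.eigenvalues * Q := by
    rw [← hconj]
    congr 2
    exact hA.1.eq_mul_diagonal_mul
  rw [hA.1.cfc_eq_mul_diagonal_mul, hconj, hA', conjTranspose_mul_diagonal_mul_apply_self,
    conjTranspose_mul_diagonal_mul_apply_self]
  have := hf.le_map_sum (t := Finset.univ) (w := fun j => Q j i ^ 2) (p := hA.1.eigenvalues)
    (fun j _ => sq_nonneg _) (sum_sq_apply_eq_one hQ i) (fun j _ => hA.eigenvalues_nonneg j)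
  simpa [smul_eq_mul, mul_comm] using this

lemma trace_cfc_le_sum (hA : A.PosSemidef) (hf : ConcaveOn ℝ (Set.Ici 0) f) {W : Matrix n n ℝ}
    (hW : Wᴴ * W = 1) : (cfc f A).trace ≤ ∑ i, f ((Wᴴ * A * W) i i) := by
  rw [trace_eq_sum_conjTranspose_mul_mul_apply_self _ (mul_eq_one_comm.mp hW)]
  exact Finset.sum_le_sum fun i _ => hA.conjTranspose_mul_cfc_mul_apply_self_le hf hW i

theorem trace_cfc_le_of_posSemidef_sub (hA : A.PosSemidef) (hB : B.PosSemidef)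
    (hAB : (B - A).PosSemidef) (hf : ConcaveOn ℝ (Set.Ici 0) f)
    (hf_mono : MonotoneOn f (Set.Ici 0)) : (cfc f A).trace ≤ (cfc f B).trace := by
  obtain ⟨W, hW, hBW⟩ := hB.1.exists_trace_cfc_eq_sum
  rw [hBW]
  refine (hA.trace_cfc_le_sum hf hW).trans (Finset.sum_le_sum fun i _ => ?_)
  have hdiff := (hAB.conjTranspose_mul_mul_same W).diag_nonneg (i := i)
  rw [mul_sub, sub_mul, sub_apply, sub_nonneg] at hdiff
  exact hf_mono (hA.conjTranspose_mul_mul_same W).diag_nonneg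
    (hB.conjTranspose_mul_mul_same W).diag_nonneg hdiff

theorem concaveOn_trace_cfc (hf : ConcaveOn ℝ (Set.Ici 0) f) :
    ConcaveOn ℝ {A : Matrix n n ℝ | A.PosSemidef} (fun A => (cfc f A).trace) := by
  refine ⟨convex_setOf_posSemidef, fun A hA B hB a b ha hb hab => ?_⟩
  have hC : (a • A + b • B).PosSemidef := convex_setOf_posSemidef hA hB ha hb hab
  obtain ⟨W, hW, hCW⟩ := hC.1.exists_trace_cfc_eq_sum
  have hdiag (i : n) :
      (Wᴴ * (a • A + b • B) * W) i i = a • (Wᴴ * A * W) i i + b • (Wᴴ * B * W) i i := by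
    simp only [mul_add, add_mul, Matrix.mul_smul, Matrix.smul_mul, add_apply, smul_apply]
  calc a • (cfc f A).trace + b • (cfc f B).trace
      ≤ a • ∑ i, f ((Wᴴ * A * W) i i) + b • ∑ i, f ((Wᴴ * B * W) i i) :=
        add_le_add (smul_le_smul_of_nonneg_left (hA.trace_cfc_le_sum hf hW) ha)
          (smul_le_smul_of_nonneg_left (hB.trace_cfc_le_sum hf hW) hb)
    _ = ∑ i, (a • f ((Wᴴ * A * W) i i) + b • f ((Wᴴ * B * W) i i)) := by
        rw [Finset.smul_sum, Finset.smul_sum, Finset.sum_add_distrib]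
    _ ≤ ∑ i, f ((Wᴴ * (a • A + b • B) * W) i i) := Finset.sum_le_sum fun i _ => by
        rw [hdiag]
        exact hf.2 (hA.conjTranspose_mul_mul_same W).diag_nonneg
          (hB.conjTranspose_mul_mul_same W).diag_nonneg ha hb hab
    _ = (cfc f (a • A + b • B)).trace := (hCW f).symm

end PosSemidef

end Matrix

lemma mpow_eq_cfc {k : ℕ} {S : Matrix (Fin k) (Fin k) ℝ} (hS : S.IsHermitian) (s : ℝ) :
    mpow S s = cfc (fun x : ℝ => x ^ s) S := by
  rw [mpow, dif_pos hS, hS.cfc_eq]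

theorem stmt_14_general {m r : ℕ}
    (s : ℝ) (hs0 : 0 < s) (hs1 : s ≤ 1)
    (K : Matrix (Fin m) (Fin r) ℝ)
    (M₁ M₂ : Matrix (Fin m) (Fin m) ℝ)
    (hM₁ : M₁.PosDef) (hM₂ : M₂.PosDef) :
    ((M₂ - M₁).PosSemidef →
      (mpow (Kᵀ * M₁ * K) s).trace ≤ (mpow (Kᵀ * M₂ * K) s).trace) ∧
    (∀ α : ℝ, 0 ≤ α → α ≤ 1 →
      α * (mpow (Kᵀ * M₁ * K) s).trace + (1 - α) * (mpow (Kᵀ * M₂ * K) s).trace ≤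
        (mpow (Kᵀ * (α • M₁ + (1 - α) • M₂) * K) s).trace) := by
  have hconcave : ConcaveOn ℝ (Set.Ici 0) (fun x : ℝ => x ^ s) := Real.concaveOn_rpow hs0.le hs1
  have hKMK {M : Matrix (Fin m) (Fin m) ℝ} (hM : M.PosSemidef) : (Kᵀ * M * K).PosSemidef := by
    simpa [conjTranspose_eq_transpose_of_trivial] using hM.conjTranspose_mul_mul_same K
  have hmpow {M : Matrix (Fin m) (Fin m) ℝ} (hM : M.PosSemidef) :
      mpow (Kᵀ * M * K) s = cfc (fun x : ℝ => x ^ s) (Kᵀ * M * K) :=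
    mpow_eq_cfc (hKMK hM).1 s
  have hA := hKMK hM₁.posSemidef
  have hB := hKMK hM₂.posSemidef
  refine ⟨fun h12 => ?_, fun α hα0 hα1 => ?_⟩
  · rw [hmpow hM₁.posSemidef, hmpow hM₂.posSemidef]
    refine hA.trace_cfc_le_of_posSemidef_sub hB ?_ hconcave
      (Real.monotoneOn_rpow_Ici_of_exponent_nonneg hs0.le)
    simpa only [Matrix.mul_sub, Matrix.sub_mul] using hKMK h12
  · have hα : 0 ≤ 1 - α := sub_nonneg.mpr hα1
    rw [hmpow hM₁.posSemidef, hmpow hM₂.posSemidef,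
      hmpow (convex_setOf_posSemidef hM₁.posSemidef hM₂.posSemidef hα0 hα (by ring)),
      Matrix.mul_add, Matrix.add_mul, Matrix.mul_smul, Matrix.mul_smul, Matrix.smul_mul,
      Matrix.smul_mul]
    exact (PosSemidef.concaveOn_trace_cfc hconcave).2 hA hB hα0 hα (by ring)

/-- For `s ∈ (0,1]` and `K` of full column rank, the function
`M ↦ tr((Kᵀ M K)^s)` is increasing and concave on positive definite matrices
(i.e. `ψ_{p,K}(M) = tr((Kᵀ M K)^{-p})`, `p = -s ∈ [-1,0)`, is increasing and
concave). -/
theorem stmt_14 {m r : ℕ} (hr : 0 < r) (hrm : r ≤ m)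
    (s : ℝ) (hs0 : 0 < s) (hs1 : s ≤ 1)
    (K : Matrix (Fin m) (Fin r) ℝ) (hK : K.rank = r)
    (M₁ M₂ : Matrix (Fin m) (Fin m) ℝ)
    (hM₁ : M₁.PosDef) (hM₂ : M₂.PosDef) :
    ((M₂ - M₁).PosSemidef →
      (mpow (Kᵀ * M₁ * K) s).trace ≤ (mpow (Kᵀ * M₂ * K) s).trace) ∧
    (∀ α : ℝ, 0 ≤ α → α ≤ 1 →
      α * (mpow (Kᵀ * M₁ * K) s).trace + (1 - α) * (mpow (Kᵀ * M₂ * K) s).trace ≤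
        (mpow (Kᵀ * (α • M₁ + (1 - α) • M₂) * K) s).trace) :=
  stmt_14_general s hs0 hs1 K M₁ M₂ hM₁ hM₂
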